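/- Let G=(V,w,m) be a connected, locally finite weighted graph, let x₀ ≠ y₀ be vertices and ε > 0, and suppose d(x₀,y₀)·κ(x₀,y₀) ≤ ε. Then there exists an optimal transport plan ρ : B₁(x₀) × B₁(y₀) → [0,∞) such that Σ_{x ∈ B₁(x₀), y ∈ B₁(y₀), d(x,y) > d(x₀,y₀)} ρ(x,y) ≥ (q_min − ε)/2. -/

import Mathlib

open scoped BigOperators

/-- A weighted graph `G = (V, w, m)`: a symmetric edge-weight function `w`
vanishing on the diagonal, a positive vertex measure `m`, and local finiteness. -/
structure WeightedGraph (V : Type*) where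
  w : V → V → ℝ
  m : V → ℝ
  w_symm : ∀ x y, w x y = w y x
  w_nonneg : ∀ x y, 0 ≤ w x y
  w_diag : ∀ x, w x x = 0
  m_pos : ∀ x, 0 < m x
  locFin : ∀ x, {y | 0 < w x y}.Finite

namespace WeightedGraph

variable {V : Type*} (G : WeightedGraph V)

/-- Adjacency: `x ~ y` iff `w x y > 0`. -/
def Adj (x y : V) : Prop := 0 < G.w x y

/-- The underlying simple graph. -/
def toSimpleGraph : SimpleGraph V where
  Adj x y := 0 < G.w x y
  symm := by refine ⟨?_⟩; intro x y h; rw [G.w_symm y x]; exact h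
  loopless := by refine ⟨?_⟩; intro x h; rw [G.w_diag] at h; exact lt_irrefl 0 h

/-- Combinatorial graph distance. -/
noncomputable def d (x y : V) : ℕ := G.toSimpleGraph.dist x y

/-- Transition rate `q(x,y) = w(x,y)/m(x)`. -/
noncomputable def q (x y : V) : ℝ := G.w x y / G.m x

/-- The graph Laplacian `Δf(x) = Σ_y q(x,y) (f(y) - f(x))`. -/
noncomputable def lap (f : V → ℝ) (x : V) : ℝ := ∑ᶠ y, G.q x y * (f y - f x)

/-- The weighted vertex degree `Deg(x) = Σ_y q(x,y)`. -/
noncomputable def Deg (x : V) : ℝ := ∑ᶠ y, G.q x y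

/-- The maximal weighted vertex degree. -/
noncomputable def DegMax : ℝ := ⨆ x, G.Deg x

/-- The minimal transition rate over edges, `q_min = inf_{x ~ y} q(x,y)`. -/
noncomputable def qMin : ℝ := sInf {r : ℝ | ∃ x y, G.Adj x y ∧ r = G.q x y}

/-- `‖∇f‖_∞ = sup_{x ~ y} (f x - f y)/d(x,y)`. -/
noncomputable def gradNorm (f : V → ℝ) : ℝ :=
  sSup {r : ℝ | ∃ x y, G.Adj x y ∧ r = (f x - f y) / (G.d x y : ℝ)}

/-- The Ollivier curvature
`κ(x,y) = inf { ∇_{xy} Δf : ∇_{yx} f = 1, ‖∇f‖_∞ = 1 }`. -/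
noncomputable def kappa (x y : V) : ℝ :=
  sInf {r : ℝ | ∃ f : V → ℝ,
    (f y - f x) / (G.d y x : ℝ) = 1 ∧ G.gradNorm f = 1 ∧
    r = (G.lap f x - G.lap f y) / (G.d x y : ℝ)}

/-- A function is harmonic if `Δf = 0`. -/
def Harmonic (f : V → ℝ) : Prop := ∀ x, G.lap f x = 0

/-- A transport plan between `x₀ ≠ y₀`: a nonnegative function supported on
`B₁(x₀) × B₁(y₀)` whose marginals on the spheres `S₁(x₀)`, `S₁(y₀)` are
`q(x₀,·)` and `q(y₀,·)` respectively. -/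
def IsTransportPlan (x₀ y₀ : V) (ρ : V → V → ℝ) : Prop :=
  (∀ x y, 0 ≤ ρ x y) ∧
  (∀ x y, ρ x y ≠ 0 → G.d x₀ x ≤ 1 ∧ G.d y₀ y ≤ 1) ∧
  (∀ x, G.d x₀ x = 1 → ∑ᶠ y, ρ x y = G.q x₀ x) ∧
  (∀ y, G.d y₀ y = 1 → ∑ᶠ x, ρ x y = G.q y₀ y)

/-- The transport functional `Σ_{x,y} ρ(x,y) (1 - d(x,y)/d(x₀,y₀))`. -/
noncomputable def transportCost (x₀ y₀ : V) (ρ : V → V → ℝ) : ℝ :=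
  ∑ᶠ x, ∑ᶠ y, ρ x y * (1 - (G.d x y : ℝ) / (G.d x₀ y₀ : ℝ))

/-- An optimal transport plan attains the supremum of the transport functional. -/
def IsOptimalTransportPlan (x₀ y₀ : V) (ρ : V → V → ℝ) : Prop :=
  G.IsTransportPlan x₀ y₀ ρ ∧
  ∀ ρ' : V → V → ℝ, G.IsTransportPlan x₀ y₀ ρ' →
    G.transportCost x₀ y₀ ρ' ≤ G.transportCost x₀ y₀ ρ

end WeightedGraph

/-!
Start from an optimal plan, which exists by compactness: the plans without mass on
`(x₀, y₀)` form a compact set, and that entry does not enter the cost. Let `x₁ ~ x₀` lie on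
a geodesic from `x₀` to `y₀`. Whatever `x₁` sends to distance `d(x₀, y₀)` can be sent from
`x₀` instead (at most one step longer) while `x₁` sends it to `y₀` (one step shorter), so
the plan stays optimal. Afterwards each unit of mass leaving `x₁` travels at least one step
less than `d(x₀, y₀)`, each unit travelling farther travels at most two steps more, and no
other mass travels farther. Hence
`q(x₀, x₁) - 2 · (long mass) ≤ d(x₀, y₀) · cost ≤ d(x₀, y₀) · κ ≤ ε`,
the middle inequality being weak duality against the 1-Lipschitz functions defining `κ`.
-/

theorem finsum_finsum_eq_sum_sum {α β M : Type*} [AddCommMonoid M] {f : α → β → M}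
    (s : Finset α) (t : Finset β) (h : ∀ x y, f x y ≠ 0 → x ∈ s ∧ y ∈ t) :
    ∑ᶠ x, ∑ᶠ y, f x y = ∑ x ∈ s, ∑ y ∈ t, f x y := by
  have hrow : ∀ x, ∑ᶠ y, f x y = ∑ y ∈ t, f x y := fun x =>
    finsum_eq_sum_of_support_subset _ fun y hy => (h x y hy).2
  simp_rw [hrow]
  refine finsum_eq_sum_of_support_subset _ fun x hx => ?_
  obtain ⟨y, -, hy⟩ := Finset.exists_ne_zero_of_sum_ne_zero hx
  exact (h x y hy).1

namespace WeightedGraph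

variable {V : Type*}

section Graph

variable (G : WeightedGraph V)

lemma q_nonneg (x y : V) : 0 ≤ G.q x y := div_nonneg (G.w_nonneg x y) (G.m_pos x).le

lemma q_self (x : V) : G.q x x = 0 := by simp [q, G.w_diag]

lemma qMin_le_q {x y : V} (h : G.toSimpleGraph.Adj x y) : G.qMin ≤ G.q x y :=
  csInf_le ⟨0, by rintro r ⟨a, b, -, rfl⟩; exact G.q_nonneg a b⟩ ⟨x, y, h, rfl⟩

lemma d_comm (x y : V) : G.d x y = G.d y x := SimpleGraph.dist_comm

@[simp] lemma d_self (x : V) : G.d x x = 0 := SimpleGraph.dist_self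

lemma d_eq_one_of_adj {x y : V} (h : G.toSimpleGraph.Adj x y) : G.d x y = 1 :=
  SimpleGraph.dist_eq_one_iff_adj.mpr h

lemma exists_adj_d_add_one_eq (hconn : G.toSimpleGraph.Connected) {x y : V} (hxy : x ≠ y) :
    ∃ z, G.toSimpleGraph.Adj x z ∧ G.d z y + 1 = G.d x y := by
  obtain ⟨p, hp⟩ := hconn.exists_walk_length_eq_dist x y
  cases p with
  | nil => exact absurd rfl hxy
  | @cons _ z _ hxz p =>
    have hzy : G.d z y ≤ p.length := SimpleGraph.dist_le p
    have htri : G.d x y ≤ G.d x z + G.d z y := hconn.dist_triangle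
    rw [SimpleGraph.Walk.length_cons] at hp
    rw [G.d_eq_one_of_adj hxz] at htri
    exact ⟨z, hxz, by unfold d at *; omega⟩

noncomputable def ball (x : V) : Finset V :=
  (Set.Finite.union (G.locFin x) (Set.finite_singleton x)).toFinset

lemma self_mem_ball (x : V) : x ∈ G.ball x := by
  simp [ball]

lemma mem_ball_of_adj {x z : V} (h : G.toSimpleGraph.Adj x z) : z ∈ G.ball x := by
  simp only [ball, Set.Finite.mem_toFinset]
  exact Or.inl h

lemma mem_ball_of_q_ne_zero {x z : V} (h : G.q x z ≠ 0) : z ∈ G.ball x :=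
  G.mem_ball_of_adj ((G.w_nonneg x z).lt_of_ne' fun hw => h (by simp [q, hw]))

variable {G} in
lemma mem_ball (hconn : G.toSimpleGraph.Connected) {x z : V} :
    z ∈ G.ball x ↔ G.d x z ≤ 1 := by
  simp only [ball, Set.Finite.mem_toFinset, Set.mem_union, Set.mem_ofPred_eq,
    Set.mem_singleton_iff]
  constructor
  · rintro (h | rfl)
    · exact (G.d_eq_one_of_adj h).le
    · simp
  · intro h
    interval_cases hd : G.d x z
    · exact Or.inr (hconn.dist_eq_zero_iff.mp hd).symm
    · exact Or.inl (SimpleGraph.dist_eq_one_iff_adj.mp hd)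

variable {G} in
lemma d_eq_one_iff_mem_ball_ne (hconn : G.toSimpleGraph.Connected) {x z : V} :
    G.d x z = 1 ↔ z ∈ G.ball x ∧ z ≠ x := by
  have h0 : G.d x z = 0 ↔ z = x := hconn.dist_eq_zero_iff.trans eq_comm
  rw [mem_ball hconn, Ne, ← h0]
  omega

variable {G} in
lemma d_le_d_add_one_of_mem_ball (hconn : G.toSimpleGraph.Connected) (x : V) {y y₀ : V}
    (hy : y ∈ G.ball y₀) : G.d x y ≤ G.d x y₀ + 1 :=
  hconn.dist_triangle.trans (Nat.add_le_add_left ((mem_ball hconn).1 hy) _)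

lemma lap_eq_sum (f : V → ℝ) (x : V) :
    G.lap f x = ∑ z ∈ G.ball x, G.q x z * (f z - f x) :=
  finsum_eq_sum_of_support_subset _ fun _ hz => G.mem_ball_of_q_ne_zero (left_ne_zero_of_mul hz)

variable {G} in
lemma sub_le_d_of_gradNorm_eq_one (hconn : G.toSimpleGraph.Connected) {f : V → ℝ}
    (hf : G.gradNorm f = 1) (x y : V) : f x - f y ≤ G.d x y := by
  have hbdd : BddAbove {r : ℝ | ∃ x y, G.Adj x y ∧ r = (f x - f y) / (G.d x y : ℝ)} := by
    by_contra hb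
    rw [gradNorm, csSup_of_not_bddAbove hb, Real.sSup_empty] at hf
    exact zero_ne_one hf
  have hadj : ∀ a b, G.toSimpleGraph.Adj a b → f a - f b ≤ 1 := fun a b hab => by
    have := le_csSup hbdd ⟨a, b, hab, rfl⟩
    rwa [← gradNorm, hf, G.d_eq_one_of_adj hab, Nat.cast_one, div_one] at this
  have hwalk : ∀ {a b : V} (p : G.toSimpleGraph.Walk a b), f a - f b ≤ p.length := by
    intro a b p
    induction p with
    | nil => simp
    | @cons u v _ huv p ih =>
      rw [SimpleGraph.Walk.length_cons, Nat.cast_succ]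
      linarith [hadj u v huv]
  obtain ⟨p, hp⟩ := hconn.exists_walk_length_eq_dist x y
  exact (hwalk p).trans_eq (by rw [hp]; rfl)

variable {G} in
lemma gradNorm_d_eq_one (hconn : G.toSimpleGraph.Connected) {x₀ y₀ : V} (hxy : x₀ ≠ y₀) :
    G.gradNorm (fun z => (G.d x₀ z : ℝ)) = 1 := by
  refine IsGreatest.csSup_eq ⟨?_, ?_⟩
  · obtain ⟨z, hz, -⟩ := G.exists_adj_d_add_one_eq hconn hxy
    refine ⟨z, x₀, hz.symm, ?_⟩
    simp [G.d_eq_one_of_adj hz, G.d_eq_one_of_adj hz.symm]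
  · rintro r ⟨a, b, hab : G.toSimpleGraph.Adj a b, rfl⟩
    have htri : G.d x₀ a ≤ G.d x₀ b + G.d b a := hconn.dist_triangle
    rw [G.d_eq_one_of_adj hab.symm] at htri
    rw [G.d_eq_one_of_adj hab, Nat.cast_one, div_one, sub_le_iff_le_add']
    dsimp only
    exact_mod_cast htri

end Graph

section TransportPlan

variable {G : WeightedGraph V} {x₀ y₀ x₁ : V} {ρ : V → V → ℝ} {t : V → ℝ}

lemma isTransportPlan_iff (hconn : G.toSimpleGraph.Connected) :
    G.IsTransportPlan x₀ y₀ ρ ↔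
      (∀ x y, 0 ≤ ρ x y) ∧ (∀ x y, ¬(x ∈ G.ball x₀ ∧ y ∈ G.ball y₀) → ρ x y = 0) ∧
      (∀ x ∈ G.ball x₀, x ≠ x₀ → ∑ y ∈ G.ball y₀, ρ x y = G.q x₀ x) ∧
      (∀ y ∈ G.ball y₀, y ≠ y₀ → ∑ x ∈ G.ball x₀, ρ x y = G.q y₀ y) := by
  have hsupp_iff : (∀ x y, ρ x y ≠ 0 → G.d x₀ x ≤ 1 ∧ G.d y₀ y ≤ 1) ↔
      ∀ x y, ¬(x ∈ G.ball x₀ ∧ y ∈ G.ball y₀) → ρ x y = 0 := by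
    simp only [mem_ball hconn]
    exact forall₂_congr fun x y => not_imp_comm
  rw [IsTransportPlan, hsupp_iff]
  refine and_congr_right' (and_congr_right fun hsupp => and_congr ?_ ?_)
  · refine forall_congr' fun x => ?_
    rw [d_eq_one_iff_mem_ball_ne hconn, and_imp, finsum_eq_sum_of_support_subset _
      fun y hy => by_contra fun hyB => hy (hsupp x y fun h => hyB h.2)]
  · refine forall_congr' fun y => ?_
    rw [d_eq_one_iff_mem_ball_ne hconn, and_imp, finsum_eq_sum_of_support_subset _
      fun x hx => by_contra fun hxA => hx (hsupp x y fun h => hxA h.1)]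

lemma IsTransportPlan.mem_ball_of_ne_zero (hconn : G.toSimpleGraph.Connected)
    (hρ : G.IsTransportPlan x₀ y₀ ρ) {x y : V} (h : ρ x y ≠ 0) : x ∈ G.ball x₀ ∧ y ∈ G.ball y₀ :=
  by_contra fun hn => h (((isTransportPlan_iff hconn).1 hρ).2.1 x y hn)

lemma IsTransportPlan.sum_row (hconn : G.toSimpleGraph.Connected)
    (hρ : G.IsTransportPlan x₀ y₀ ρ) {x : V} (hx : x ∈ G.ball x₀) (hne : x ≠ x₀) :
    ∑ y ∈ G.ball y₀, ρ x y = G.q x₀ x :=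
  ((isTransportPlan_iff hconn).1 hρ).2.2.1 x hx hne

lemma IsTransportPlan.sum_col (hconn : G.toSimpleGraph.Connected)
    (hρ : G.IsTransportPlan x₀ y₀ ρ) {y : V} (hy : y ∈ G.ball y₀) (hne : y ≠ y₀) :
    ∑ x ∈ G.ball x₀, ρ x y = G.q y₀ y :=
  ((isTransportPlan_iff hconn).1 hρ).2.2.2 y hy hne

lemma IsTransportPlan.transportCost_eq_sum (hconn : G.toSimpleGraph.Connected)
    (hρ : G.IsTransportPlan x₀ y₀ ρ) :
    G.transportCost x₀ y₀ ρ = ∑ x ∈ G.ball x₀, ∑ y ∈ G.ball y₀,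
      ρ x y * (1 - (G.d x y : ℝ) / (G.d x₀ y₀ : ℝ)) :=
  finsum_finsum_eq_sum_sum _ _ fun _ _ h => hρ.mem_ball_of_ne_zero hconn (left_ne_zero_of_mul h)

lemma IsTransportPlan.d_mul_transportCost (hconn : G.toSimpleGraph.Connected)
    (hρ : G.IsTransportPlan x₀ y₀ ρ) (hxy : x₀ ≠ y₀) :
    G.d x₀ y₀ * G.transportCost x₀ y₀ ρ =
      ∑ x ∈ G.ball x₀, ∑ y ∈ G.ball y₀, ρ x y * (G.d x₀ y₀ - G.d x y) := by
  have hd : (G.d x₀ y₀ : ℝ) ≠ 0 := Nat.cast_ne_zero.2 (hconn.pos_dist_of_ne hxy).ne'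
  rw [hρ.transportCost_eq_sum hconn, Finset.mul_sum]
  refine Finset.sum_congr rfl fun x _ => ?_
  rw [Finset.mul_sum]
  refine Finset.sum_congr rfl fun y _ => ?_
  field_simp

lemma IsTransportPlan.lap_sub_lap_eq_sum (hconn : G.toSimpleGraph.Connected)
    (hρ : G.IsTransportPlan x₀ y₀ ρ) (f : V → ℝ) :
    G.lap f x₀ - G.lap f y₀ = ∑ x ∈ G.ball x₀, ∑ y ∈ G.ball y₀,
      ρ x y * ((f x - f x₀) - (f y - f y₀)) := by
  have hx : G.lap f x₀ = ∑ x ∈ G.ball x₀, ∑ y ∈ G.ball y₀, ρ x y * (f x - f x₀) := by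
    rw [G.lap_eq_sum]
    refine Finset.sum_congr rfl fun x hx => ?_
    rw [← Finset.sum_mul]
    rcases eq_or_ne x x₀ with rfl | hne
    · simp
    · rw [hρ.sum_row hconn hx hne]
  have hy : G.lap f y₀ = ∑ x ∈ G.ball x₀, ∑ y ∈ G.ball y₀, ρ x y * (f y - f y₀) := by
    rw [G.lap_eq_sum, Finset.sum_comm]
    refine Finset.sum_congr rfl fun y hy => ?_
    rw [← Finset.sum_mul]
    rcases eq_or_ne y y₀ with rfl | hne
    · simp
    · rw [hρ.sum_col hconn hy hne]
  simp only [hx, hy, ← Finset.sum_sub_distrib, mul_sub]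

lemma IsTransportPlan.d_mul_transportCost_le_lap_sub (hconn : G.toSimpleGraph.Connected)
    (hρ : G.IsTransportPlan x₀ y₀ ρ) (hxy : x₀ ≠ y₀) {f : V → ℝ}
    (hlip : ∀ x y, f x - f y ≤ G.d x y) (hf : f y₀ - f x₀ = G.d x₀ y₀) :
    G.d x₀ y₀ * G.transportCost x₀ y₀ ρ ≤ G.lap f x₀ - G.lap f y₀ := by
  rw [hρ.d_mul_transportCost hconn hxy, hρ.lap_sub_lap_eq_sum hconn]
  refine Finset.sum_le_sum fun x _ => Finset.sum_le_sum fun y _ => ?_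
  refine mul_le_mul_of_nonneg_left ?_ (hρ.1 x y)
  linarith [G.d_comm y x ▸ hlip y x]

lemma IsTransportPlan.transportCost_le_kappa (hconn : G.toSimpleGraph.Connected)
    (hρ : G.IsTransportPlan x₀ y₀ ρ) (hxy : x₀ ≠ y₀) :
    G.transportCost x₀ y₀ ρ ≤ G.kappa x₀ y₀ := by
  have hd : (0 : ℝ) < G.d x₀ y₀ := Nat.cast_pos.2 (hconn.pos_dist_of_ne hxy)
  refine le_csInf ⟨_, fun z => (G.d x₀ z : ℝ), ?_, gradNorm_d_eq_one hconn hxy, rfl⟩ ?_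
  · simp [G.d_comm y₀ x₀, hd.ne']
  rintro r ⟨f, hf, hgrad, rfl⟩
  rw [G.d_comm, div_eq_one_iff_eq hd.ne'] at hf
  rw [le_div_iff₀ hd, mul_comm]
  exact hρ.d_mul_transportCost_le_lap_sub hconn hxy (sub_le_d_of_gradNorm_eq_one hconn hgrad) hf


lemma IsTransportPlan.le_q_add_q (hconn : G.toSimpleGraph.Connected)
    (hρ : G.IsTransportPlan x₀ y₀ ρ) {x y : V} (hne : ¬(x = x₀ ∧ y = y₀)) :
    ρ x y ≤ G.q x₀ x + G.q y₀ y := by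
  by_cases h0 : ρ x y = 0
  · rw [h0]
    exact add_nonneg (G.q_nonneg _ _) (G.q_nonneg _ _)
  obtain ⟨hx, hy⟩ := hρ.mem_ball_of_ne_zero hconn h0
  rcases eq_or_ne x x₀ with rfl | hx₀
  · have hy₀ : y ≠ y₀ := fun h => hne ⟨rfl, h⟩
    calc ρ x y ≤ ∑ x' ∈ G.ball x, ρ x' y := Finset.single_le_sum (fun i _ => hρ.1 i y) hx
      _ = G.q y₀ y := hρ.sum_col hconn hy hy₀
      _ ≤ G.q x x + G.q y₀ y := le_add_of_nonneg_left (G.q_nonneg _ _)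
  · calc ρ x y ≤ ∑ y' ∈ G.ball y₀, ρ x y' := Finset.single_le_sum (fun i _ => hρ.1 x i) hy
      _ = G.q x₀ x := hρ.sum_row hconn hx hx₀
      _ ≤ G.q x₀ x + G.q y₀ y := le_add_of_nonneg_right (G.q_nonneg _ _)

lemma isCompact_setOf_isTransportPlan_and_apply_eq_zero (hconn : G.toSimpleGraph.Connected) :
    IsCompact {ρ : V → V → ℝ | G.IsTransportPlan x₀ y₀ ρ ∧ ρ x₀ y₀ = 0} := by
  refine (isCompact_univ_pi fun x => isCompact_univ_pi fun y =>
    isCompact_Icc (a := 0) (b := G.q x₀ x + G.q y₀ y)).of_isClosed_subset ?_ ?_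
  · simp only [isTransportPlan_iff hconn, Set.ofPred_and, Set.ofPred_forall]
    repeat' first
      | apply IsClosed.inter
      | refine isClosed_iInter fun _ => ?_
      | apply isClosed_le
      | apply isClosed_eq
    all_goals fun_prop
  · rintro ρ ⟨hρ, h0⟩ x - y -
    refine ⟨hρ.1 x y, ?_⟩
    by_cases h : x = x₀ ∧ y = y₀
    · rw [h.1, h.2, h0]
      exact add_nonneg (G.q_nonneg _ _) (G.q_nonneg _ _)
    · exact hρ.le_q_add_q hconn h

lemma isTransportPlan_through_centers [DecidableEq V] (hconn : G.toSimpleGraph.Connected) :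
    G.IsTransportPlan x₀ y₀
      (fun x y => (if x = x₀ then G.q y₀ y else 0) + (if y = y₀ then G.q x₀ x else 0)) := by
  refine (isTransportPlan_iff hconn).2 ⟨fun x y => ?_, fun x y hxy => ?_, fun x hx hne => ?_,
    fun y hy hne => ?_⟩
  · exact add_nonneg (by split_ifs <;> simp [G.q_nonneg]) (by split_ifs <;> simp [G.q_nonneg])
  · rcases eq_or_ne x x₀ with rfl | hx
    · rcases eq_or_ne y y₀ with rfl | hy
      · simp [G.q_self]
      · simp only [if_true, if_neg hy, add_zero]
        exact by_contra fun h => hxy ⟨G.self_mem_ball x, G.mem_ball_of_q_ne_zero h⟩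
    · rcases eq_or_ne y y₀ with rfl | hy
      · simp only [if_true, if_neg hx, zero_add]
        exact by_contra fun h => hxy ⟨G.mem_ball_of_q_ne_zero h, G.self_mem_ball y⟩
      · simp [hx, hy]
  · simp [hne, G.self_mem_ball]
  · simp [hne, G.self_mem_ball]

/-- The entry `(x₀, y₀)` is constrained by no marginal and does not enter the cost. -/
def eraseCenter [DecidableEq V] (ρ : V → V → ℝ) (x₀ y₀ : V) : V → V → ℝ :=
  fun x y => if x = x₀ ∧ y = y₀ then 0 else ρ x y

lemma isTransportPlan_eraseCenter [DecidableEq V] (hconn : G.toSimpleGraph.Connected)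
    (hρ : G.IsTransportPlan x₀ y₀ ρ) :
    G.IsTransportPlan x₀ y₀ (eraseCenter ρ x₀ y₀) := by
  obtain ⟨h0, hsupp, hrow, hcol⟩ := (isTransportPlan_iff hconn).1 hρ
  refine (isTransportPlan_iff hconn).2 ⟨fun x y => ?_, fun x y hxy => ?_, fun x hx hne => ?_,
    fun y hy hne => ?_⟩
  · simp only [eraseCenter]
    split_ifs
    exacts [le_rfl, h0 x y]
  · simp [eraseCenter, hsupp x y hxy]
  · simpa [eraseCenter, hne] using hrow x hx hne
  · simpa [eraseCenter, hne] using hcol y hy hne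

lemma IsTransportPlan.transportCost_eraseCenter [DecidableEq V]
    (hconn : G.toSimpleGraph.Connected) (hρ : G.IsTransportPlan x₀ y₀ ρ) (hxy : x₀ ≠ y₀) :
    G.transportCost x₀ y₀ (eraseCenter ρ x₀ y₀) = G.transportCost x₀ y₀ ρ := by
  have hd : (G.d x₀ y₀ : ℝ) ≠ 0 := Nat.cast_ne_zero.2 (hconn.pos_dist_of_ne hxy).ne'
  rw [(isTransportPlan_eraseCenter hconn hρ).transportCost_eq_sum hconn,
    hρ.transportCost_eq_sum hconn]
  refine Finset.sum_congr rfl fun x _ => Finset.sum_congr rfl fun y _ => ?_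
  simp only [eraseCenter]
  split_ifs with h
  · rw [h.1, h.2, div_self hd]
    ring
  · rfl

lemma exists_isOptimalTransportPlan (hconn : G.toSimpleGraph.Connected) (hxy : x₀ ≠ y₀) :
    ∃ ρ, G.IsOptimalTransportPlan x₀ y₀ ρ := by
  classical
  have hF : Continuous fun ρ : V → V → ℝ => ∑ x ∈ G.ball x₀, ∑ y ∈ G.ball y₀,
      ρ x y * (1 - (G.d x y : ℝ) / (G.d x₀ y₀ : ℝ)) := by
    fun_prop
  obtain ⟨ρ, ⟨hρ, -⟩, hmax⟩ :=
    (isCompact_setOf_isTransportPlan_and_apply_eq_zero hconn).exists_isMaxOn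
      ⟨_, isTransportPlan_through_centers hconn, by simp [G.q_self]⟩ hF.continuousOn
  refine ⟨ρ, hρ, fun ρ' hρ' => ?_⟩
  have hρ'₀ := isTransportPlan_eraseCenter hconn hρ'
  calc G.transportCost x₀ y₀ ρ'
      = G.transportCost x₀ y₀ (eraseCenter ρ' x₀ y₀) :=
        (hρ'.transportCost_eraseCenter hconn hxy).symm
    _ ≤ G.transportCost x₀ y₀ ρ := by
        rw [hρ'₀.transportCost_eq_sum hconn, hρ.transportCost_eq_sum hconn]
        exact hmax ⟨hρ'₀, by simp [eraseCenter]⟩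

lemma IsTransportPlan.eq_zero_of_le_row (hconn : G.toSimpleGraph.Connected)
    (hρ : G.IsTransportPlan x₀ y₀ ρ) (ht : ∀ y, 0 ≤ t y) (htρ : ∀ y, t y ≤ ρ x₁ y) {y : V}
    (hy : y ∉ G.ball y₀) : t y = 0 :=
  le_antisymm ((htρ y).trans_eq (by_contra fun h => hy (hρ.mem_ball_of_ne_zero hconn h).2)) (ht y)

lemma IsTransportPlan.finsum_eq_sum_of_le_row (hconn : G.toSimpleGraph.Connected)
    (hρ : G.IsTransportPlan x₀ y₀ ρ) (ht : ∀ y, 0 ≤ t y) (htρ : ∀ y, t y ≤ ρ x₁ y) :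
    ∑ᶠ y, t y = ∑ y ∈ G.ball y₀, t y :=
  finsum_eq_sum_of_support_subset t fun _ hy =>
    by_contra fun h => hy (hρ.eq_zero_of_le_row hconn ht htρ h)

/-- For every `y`, the mass `t y` at `(x₁, y)` is moved to `(x₀, y)`, and their total to
`(x₁, y₀)`: this keeps the row sum at `x₁` and the column sums at `y ≠ y₀`. -/
noncomputable def reroute [DecidableEq V] (ρ : V → V → ℝ) (x₀ y₀ x₁ : V) (t : V → ℝ) : V → V → ℝ :=
  fun x y => ρ x y + (if x = x₀ then t y else 0) - (if x = x₁ then t y else 0) +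
    (if x = x₁ ∧ y = y₀ then ∑ᶠ y', t y' else 0)

section Reroute

variable [DecidableEq V]

lemma isTransportPlan_reroute (hconn : G.toSimpleGraph.Connected)
    (hρ : G.IsTransportPlan x₀ y₀ ρ) (hx₁ : x₁ ∈ G.ball x₀) (ht : ∀ y, 0 ≤ t y)
    (htρ : ∀ y, t y ≤ ρ x₁ y) : G.IsTransportPlan x₀ y₀ (reroute ρ x₀ y₀ x₁ t) := by
  obtain ⟨h0, hsupp, hrow, hcol⟩ := (isTransportPlan_iff hconn).1 hρ
  refine (isTransportPlan_iff hconn).2 ⟨fun x y => ?_, fun x y hxy => ?_, fun x hx hne => ?_,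
    fun y hy hne => ?_⟩
  · have hS : 0 ≤ ∑ᶠ y, t y := finsum_nonneg ht
    rcases eq_or_ne x x₁ with rfl | hx
    · simp only [reroute]
      split_ifs <;> linarith [ht y, htρ y]
    · simp only [reroute, if_neg hx]
      split_ifs <;> linarith [ht y, h0 x y]
  · simp only [reroute, hsupp x y hxy]
    by_cases hy : y ∈ G.ball y₀
    · have hx : x ∉ G.ball x₀ := fun hx => hxy ⟨hx, hy⟩
      simp [ne_of_mem_of_not_mem (G.self_mem_ball x₀) hx |>.symm,
        ne_of_mem_of_not_mem hx₁ hx |>.symm]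
    · simp [hρ.eq_zero_of_le_row hconn ht htρ hy,
        ne_of_mem_of_not_mem (G.self_mem_ball y₀) hy |>.symm]
  · simp only [reroute, if_neg hne, add_zero, Finset.sum_add_distrib, Finset.sum_sub_distrib,
      hrow x hx hne]
    split_ifs with h
    · simp [h, hρ.finsum_eq_sum_of_le_row hconn ht htρ, G.self_mem_ball]
    · simp [h]
  · simp [reroute, hne, Finset.sum_add_distrib, Finset.sum_sub_distrib, hcol y hy hne, hx₁,
      G.self_mem_ball]

lemma d_mul_transportCost_reroute (hconn : G.toSimpleGraph.Connected)
    (hρ : G.IsTransportPlan x₀ y₀ ρ) (hxy : x₀ ≠ y₀) (hx₁ : x₁ ∈ G.ball x₀) (ht : ∀ y, 0 ≤ t y)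
    (htρ : ∀ y, t y ≤ ρ x₁ y) :
    G.d x₀ y₀ * G.transportCost x₀ y₀ (reroute ρ x₀ y₀ x₁ t) =
      G.d x₀ y₀ * G.transportCost x₀ y₀ ρ + ∑ y ∈ G.ball y₀,
        t y * (G.d x₀ y₀ + G.d x₁ y - G.d x₀ y - G.d x₁ y₀) := by
  rw [(isTransportPlan_reroute hconn hρ hx₁ ht htρ).d_mul_transportCost hconn hxy,
    hρ.d_mul_transportCost hconn hxy]
  simp only [reroute, add_mul, sub_mul, ite_mul, zero_mul, Finset.sum_add_distrib,
    Finset.sum_sub_distrib]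
  simp only [ite_and, Finset.sum_ite_irrel, Finset.sum_ite_eq', Finset.sum_const_zero,
    G.self_mem_ball, hx₁, if_true]
  rw [hρ.finsum_eq_sum_of_le_row hconn ht htρ, Finset.sum_mul, add_sub_assoc, add_assoc,
    ← Finset.sum_sub_distrib, ← Finset.sum_add_distrib]
  congr 1
  exact Finset.sum_congr rfl fun y _ => by ring

end Reroute

lemma IsOptimalTransportPlan.exists_apply_eq_zero_of_d_eq (hconn : G.toSimpleGraph.Connected)
    (hxy : x₀ ≠ y₀) (hρ : G.IsOptimalTransportPlan x₀ y₀ ρ) (hx₁ : G.toSimpleGraph.Adj x₀ x₁)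
    (hx₁y₀ : G.d x₁ y₀ + 1 = G.d x₀ y₀) :
    ∃ ρ', G.IsOptimalTransportPlan x₀ y₀ ρ' ∧ ∀ y, G.d x₁ y = G.d x₀ y₀ → ρ' x₁ y = 0 := by
  classical
  set t : V → ℝ := fun y => if G.d x₁ y = G.d x₀ y₀ then ρ x₁ y else 0
  have hx₁B : x₁ ∈ G.ball x₀ := G.mem_ball_of_adj hx₁
  have ht : ∀ y, 0 ≤ t y := fun y => by
    simp only [t]
    split_ifs
    exacts [hρ.1.1 x₁ y, le_rfl]
  have htρ : ∀ y, t y ≤ ρ x₁ y := fun y => by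
    simp only [t]
    split_ifs
    exacts [le_rfl, hρ.1.1 x₁ y]
  refine ⟨reroute ρ x₀ y₀ x₁ t, ⟨isTransportPlan_reroute hconn hρ.1 hx₁B ht htρ,
    fun ρ' hρ' => (hρ.2 ρ' hρ').trans ?_⟩, fun y hy => ?_⟩
  · have hd : (0 : ℝ) < G.d x₀ y₀ := Nat.cast_pos.2 (hconn.pos_dist_of_ne hxy)
    refine le_of_mul_le_mul_left ?_ hd
    rw [d_mul_transportCost_reroute hconn hρ.1 hxy hx₁B ht htρ, le_add_iff_nonneg_right]
    refine Finset.sum_nonneg fun y hy => ?_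
    by_cases h : G.d x₁ y = G.d x₀ y₀
    · refine mul_nonneg (ht y) ?_
      have hx₀y : (G.d x₀ y : ℝ) ≤ G.d x₀ y₀ + 1 := by
        exact_mod_cast d_le_d_add_one_of_mem_ball hconn x₀ hy
      have hx₁y₀' : (G.d x₁ y₀ : ℝ) + 1 = G.d x₀ y₀ := by exact_mod_cast hx₁y₀
      rw [h]
      linarith
    · simp [t, h]
  · have hy₀ : y ≠ y₀ := by
      rintro rfl
      omega
    simp [reroute, t, hy, hy₀, hx₁.ne']

noncomputable def longMass (G : WeightedGraph V) (x₀ y₀ : V) (ρ : V → V → ℝ) : ℝ :=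
  ∑ᶠ x, ∑ᶠ y, if G.d x₀ y₀ < G.d x y then ρ x y else 0

lemma IsTransportPlan.longMass_eq_sum (hconn : G.toSimpleGraph.Connected)
    (hρ : G.IsTransportPlan x₀ y₀ ρ) :
    G.longMass x₀ y₀ ρ =
      ∑ x ∈ G.ball x₀, ∑ y ∈ G.ball y₀, if G.d x₀ y₀ < G.d x y then ρ x y else 0 :=
  finsum_finsum_eq_sum_sum _ _ fun x y h =>
    hρ.mem_ball_of_ne_zero hconn fun h' => h (by simp [h'])

lemma IsTransportPlan.q_sub_two_mul_longMass_le (hconn : G.toSimpleGraph.Connected)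
    (hρ : G.IsTransportPlan x₀ y₀ ρ) (hxy : x₀ ≠ y₀) (hx₁ : G.toSimpleGraph.Adj x₀ x₁)
    (hx₁y₀ : G.d x₁ y₀ < G.d x₀ y₀) (hfar : ∀ y, G.d x₁ y = G.d x₀ y₀ → ρ x₁ y = 0) :
    G.q x₀ x₁ - 2 * G.longMass x₀ y₀ ρ ≤ G.d x₀ y₀ * G.transportCost x₀ y₀ ρ := by
  classical
  have hx₁A : x₁ ∈ G.ball x₀ := G.mem_ball_of_adj hx₁
  have hrow : G.q x₀ x₁ =
      ∑ x ∈ G.ball x₀, ∑ y ∈ G.ball y₀, if x = x₁ then ρ x y else 0 := by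
    simp [Finset.sum_ite_irrel, hx₁A, hρ.sum_row hconn hx₁A hx₁.ne']
  rw [hρ.longMass_eq_sum hconn, hρ.d_mul_transportCost hconn hxy, hrow, Finset.mul_sum,
    ← Finset.sum_sub_distrib]
  refine Finset.sum_le_sum fun x hx => ?_
  rw [Finset.mul_sum, ← Finset.sum_sub_distrib]
  refine Finset.sum_le_sum fun y hy => ?_
  have hρxy := hρ.1 x y
  have hdxy₀ : G.d x y₀ ≤ G.d x₀ y₀ + 1 := by
    rw [G.d_comm, G.d_comm x₀]
    exact d_le_d_add_one_of_mem_ball hconn y₀ hx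
  have hdxy := d_le_d_add_one_of_mem_ball hconn x hy
  rcases eq_or_ne x x₁ with rfl | hx'
  · have hle : G.d x y ≤ G.d x₀ y₀ := by omega
    rcases hle.lt_or_eq with hlt | heq
    · have hlt' : (G.d x y : ℝ) + 1 ≤ G.d x₀ y₀ := by exact_mod_cast hlt
      simp only [if_true, if_neg hle.not_gt]
      nlinarith
    · simp [hfar y heq]
  · have hle : (G.d x y : ℝ) ≤ G.d x₀ y₀ + 2 := by
      exact_mod_cast (by omega : G.d x y ≤ G.d x₀ y₀ + 2)
    simp only [if_neg hx']
    split_ifs with hlt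
    · nlinarith
    · have : (G.d x y : ℝ) ≤ G.d x₀ y₀ := by exact_mod_cast not_lt.1 hlt
      nlinarith

end TransportPlan

end WeightedGraph

theorem optimal_transport_plan_mass_over_longer_distance_general
    {V : Type*} (G : WeightedGraph V)
    (hconn : G.toSimpleGraph.Connected)
    (x₀ y₀ : V) (hxy : x₀ ≠ y₀) (ε : ℝ)
    (hκ : (G.d x₀ y₀ : ℝ) * G.kappa x₀ y₀ ≤ ε) :
    ∃ ρ : V → V → ℝ, G.IsOptimalTransportPlan x₀ y₀ ρ ∧
      (G.qMin - ε) / 2 ≤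
        ∑ᶠ x, ∑ᶠ y, if G.d x₀ y₀ < G.d x y then ρ x y else 0 := by
  obtain ⟨x₁, hx₁, hx₁y₀⟩ := G.exists_adj_d_add_one_eq hconn hxy
  obtain ⟨ρ₀, hρ₀⟩ := WeightedGraph.exists_isOptimalTransportPlan hconn hxy
  obtain ⟨ρ, hρ, hfar⟩ := hρ₀.exists_apply_eq_zero_of_d_eq hconn hxy hx₁ hx₁y₀
  have hcost : (G.d x₀ y₀ : ℝ) * G.transportCost x₀ y₀ ρ ≤ ε :=
    (mul_le_mul_of_nonneg_left (hρ.1.transportCost_le_kappa hconn hxy) (Nat.cast_nonneg _)).trans hκ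
  have hmass := hρ.1.q_sub_two_mul_longMass_le hconn hxy hx₁ (by omega) hfar
  refine ⟨ρ, hρ, ?_⟩
  change _ ≤ G.longMass x₀ y₀ ρ
  linarith [G.qMin_le_q hx₁]

/-- If `d(x₀,y₀) κ(x₀,y₀) ≤ ε` for some `ε > 0`, then there is
an optimal transport plan `ρ` with
`Σ_{d(x,y) > d(x₀,y₀)} ρ(x,y) ≥ (q_min - ε)/2`. -/
theorem optimal_transport_plan_mass_over_longer_distance
    {V : Type*} [Countable V] (G : WeightedGraph V)
    (hconn : G.toSimpleGraph.Connected)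
    (x₀ y₀ : V) (hxy : x₀ ≠ y₀) (ε : ℝ) (hε : 0 < ε)
    (hκ : (G.d x₀ y₀ : ℝ) * G.kappa x₀ y₀ ≤ ε) :
    ∃ ρ : V → V → ℝ, G.IsOptimalTransportPlan x₀ y₀ ρ ∧
      (G.qMin - ε) / 2 ≤
        ∑ᶠ x, ∑ᶠ y, if G.d x₀ y₀ < G.d x y then ρ x y else 0 :=
  optimal_transport_plan_mass_over_longer_distance_general G hconn x₀ y₀ hxy ε hκ
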